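/- arXiv:2602.05267 — 4 statements merged into one kernel-verified Lean document; each statement's English description precedes it below -/
import Mathlib

section
/- Let G be a finite simple graph equipped with a type-2A crossing structure, let S be a set of vertices of G, and let F and F' be two distinct connected components of G − S. If a and b are vertices of F with ab an edge of G, and c ∈ S and d ∈ V(F') with cd an edge of G, then the edges ab and cd do not cross. -/
/-- The associated edges of a crossing pair `ab`, `cd`: those of the vertex pairs
`ac`, `ad`, `bc`, `bd` that are edges of `G`. -/
def AssocEdges {V : Type*} (G : SimpleGraph V) (a b c d : V) : Set (Sym2 V) :=
  {e | e ∈ ({s(a, c), s(a, d), s(b, c), s(b, d)} : Set (Sym2 V)) ∧ e ∈ G.edgeSet}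

/-- A crossing structure on a simple graph `G`: a symmetric irreflexive relation on
unordered pairs of vertices that relates only edges of `G`, and whenever it relates
two edges, these edges have four pairwise distinct endpoints. -/
structure IsCrossingStructure {V : Type*} (G : SimpleGraph V)
    (Cross : Sym2 V → Sym2 V → Prop) : Prop where
  symm : ∀ e f, Cross e f → Cross f e
  irrefl : ∀ e, ¬ Cross e e
  edge_mem : ∀ e f, Cross e f → e ∈ G.edgeSet ∧ f ∈ G.edgeSet
  distinct : ∀ a b c d, Cross s(a, b) s(c, d) →
    a ≠ b ∧ a ≠ c ∧ a ≠ d ∧ b ≠ c ∧ b ≠ d ∧ c ≠ d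

/-- A crossing structure is type-2A if every crossing pair has at least two associated
edges, and whenever a crossing pair has exactly two associated edges, these two edges
share no endpoint (i.e. they are the pair `ac, bd` or the pair `ad, bc`). -/
def IsType2A {V : Type*} (G : SimpleGraph V) (Cross : Sym2 V → Sym2 V → Prop) : Prop :=
  ∀ a b c d, Cross s(a, b) s(c, d) →
    2 ≤ (AssocEdges G a b c d).ncard ∧
      ((AssocEdges G a b c d).ncard = 2 →
        (G.Adj a c ∧ G.Adj b d) ∨ (G.Adj a d ∧ G.Adj b c))

/-- A crossing structure is 1-planar if every edge crosses at most one other edge. -/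
def IsOnePlanar {V : Type*} (Cross : Sym2 V → Sym2 V → Prop) : Prop :=
  ∀ e f g, Cross e f → Cross e g → f = g

/-- A crossing structure is nice if no associated edge of a crossing pair crosses any edge. -/
def IsNice {V : Type*} (G : SimpleGraph V) (Cross : Sym2 V → Sym2 V → Prop) : Prop :=
  ∀ a b c d, Cross s(a, b) s(c, d) →
    ∀ e ∈ AssocEdges G a b c d, ∀ f, ¬ Cross e f

/-- An edge is crossed if it crosses some edge. -/
def IsCrossed {V : Type*} (Cross : Sym2 V → Sym2 V → Prop) (e : Sym2 V) : Prop :=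
  ∃ f, Cross e f

theorem IsType2A.adj_of_cross {V : Type*} {G : SimpleGraph V} {Cross : Sym2 V → Sym2 V → Prop}
    (h2A : IsType2A G Cross) {a b c d : V} (h : Cross s(a, b) s(c, d)) :
    G.Adj a d ∨ G.Adj b d := by
  by_contra! hd
  obtain ⟨had, hbd⟩ := hd
  obtain ⟨htwo_le, htwo⟩ := h2A a b c d h
  -- the associated edges now lie among `ac, bc`: at most two of them, and sharing `c`
  have hsub : AssocEdges G a b c d ⊆ {s(a, c), s(b, c)} := by
    rintro e ⟨he | he | he | he, hedge⟩ <;> subst he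
    · exact .inl rfl
    · exact absurd hedge had
    · exact .inr rfl
    · exact absurd hedge hbd
  have hle : (AssocEdges G a b c d).ncard ≤ 2 :=
    (Set.ncard_le_ncard hsub (Set.toFinite _)).trans ((Set.ncard_insert_le _ _).trans (by simp))
  rcases htwo (hle.antisymm htwo_le) with ⟨-, hbd'⟩ | ⟨had', -⟩
  · exact hbd hbd'
  · exact had had'

theorem SimpleGraph.ConnectedComponent.not_adj_of_ne {V : Type*} {G : SimpleGraph V}
    {C C' : G.ConnectedComponent} (hCC' : C ≠ C') {x y : V} (hx : x ∈ C.supp)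
    (hy : y ∈ C'.supp) : ¬ G.Adj x y := fun hxy =>
  hCC' ((C.mem_supp_of_adj_mem_supp hx hxy).symm.trans hy)

theorem statement1_general {V : Type*} (G : SimpleGraph V)
    (Cross : Sym2 V → Sym2 V → Prop)
    (h2A : IsType2A G Cross)
    (S : Set V)
    (F F' : (G.induce (Sᶜ : Set V)).ConnectedComponent) (hFF' : F ≠ F')
    (a b : (Sᶜ : Set V)) (ha : a ∈ F.supp) (hb : b ∈ F.supp)
    (c : V) (d : (Sᶜ : Set V)) (hd : d ∈ F'.supp) :
    ¬ Cross s((a : V), (b : V)) s(c, (d : V)) := fun h =>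
  (h2A.adj_of_cross h).elim (F.not_adj_of_ne hFF' ha hd) (F.not_adj_of_ne hFF' hb hd)

/-- for a vertex set `S` and distinct components `F`, `F'` of `G − S`,
an edge `ab` of `G` inside `F` never crosses an edge `cd` of `G` with `c ∈ S` and
`d` in `F'`. -/
theorem statement1 {V : Type*} [Fintype V] (G : SimpleGraph V)
    (Cross : Sym2 V → Sym2 V → Prop)
    (hC : IsCrossingStructure G Cross) (h2A : IsType2A G Cross)
    (S : Set V)
    (F F' : (G.induce (Sᶜ : Set V)).ConnectedComponent) (hFF' : F ≠ F')
    (a b : (Sᶜ : Set V)) (ha : a ∈ F.supp) (hb : b ∈ F.supp)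
    (hab : G.Adj (a : V) (b : V))
    (c : V) (hc : c ∈ S) (d : (Sᶜ : Set V)) (hd : d ∈ F'.supp)
    (hcd : G.Adj c (d : V)) :
    ¬ Cross s((a : V), (b : V)) s(c, (d : V)) :=
  statement1_general G Cross h2A S F F' hFF' a b ha hb c d hd
end

section
/- Let G be a finite simple graph equipped with a type-2A crossing structure, let S be a set of vertices of G, let F be a connected component of G − S, and let ab be an edge of G with both endpoints a, b in V(F). If the edge ab crosses an edge xy of G, then both x and y lie in S ∪ V(F); in other words, either x, y ∈ S, or x, y ∈ V(F), or one of x, y lies in S and the other lies in V(F). -/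
/-! In a type-2A crossing, each endpoint of the crossed edge `xy` is adjacent to `a` or `b`:
otherwise at most two associated edges remain, both through the other endpoint, which type-2A
forbids. A neighbour of a vertex of the component `F` lies in `S` or in `F` itself. -/

theorem ncard_assocEdges_le_two_of_not_adj {V : Type*} {G : SimpleGraph V} {a b c : V}
    (hac : ¬ G.Adj a c) (hbc : ¬ G.Adj b c) (d : V) :
    (AssocEdges G a b c d).ncard ≤ 2 := by
  have hsub : AssocEdges G a b c d ⊆ {s(a, d), s(b, d)} := by
    rintro e ⟨he | he | he | he, heG⟩ <;> subst he
    · exact absurd heG hac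
    · exact Set.mem_insert _ _
    · exact absurd heG hbc
    · exact Set.mem_insert_of_mem _ rfl
  calc (AssocEdges G a b c d).ncard ≤ ({s(a, d), s(b, d)} : Set (Sym2 V)).ncard :=
        Set.ncard_le_ncard hsub
    _ ≤ ({s(b, d)} : Set (Sym2 V)).ncard + 1 := Set.ncard_insert_le _ _
    _ = 2 := by rw [Set.ncard_singleton]

namespace IsType2A

variable {V : Type*} {G : SimpleGraph V} {Cross : Sym2 V → Sym2 V → Prop}

theorem adj_left_of_cross (h2A : IsType2A G Cross) {a b c d : V}
    (hcross : Cross s(a, b) s(c, d)) : G.Adj a c ∨ G.Adj b c := by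
  by_contra! hnot
  obtain ⟨htwo_le, htwo⟩ := h2A a b c d hcross
  have hle := ncard_assocEdges_le_two_of_not_adj hnot.1 hnot.2 d
  rcases htwo (le_antisymm hle htwo_le) with ⟨hac, -⟩ | ⟨-, hbc⟩
  · exact hnot.1 hac
  · exact hnot.2 hbc

theorem adj_right_of_cross (h2A : IsType2A G Cross) {a b c d : V}
    (hcross : Cross s(a, b) s(c, d)) : G.Adj a d ∨ G.Adj b d :=
  h2A.adj_left_of_cross (c := d) (d := c) (by rwa [Sym2.eq_swap (a := d)])

end IsType2A

theorem SimpleGraph.ConnectedComponent.mem_union_image_supp_of_adj {V : Type*}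
    {G : SimpleGraph V} {S : Set V} (F : (G.induce Sᶜ).ConnectedComponent)
    {u : (Sᶜ : Set V)} (hu : u ∈ F.supp) {z : V} (huz : G.Adj u z) :
    z ∈ S ∪ Subtype.val '' F.supp := by
  by_cases hzS : z ∈ S
  · exact Or.inl hzS
  · have hadj : (G.induce Sᶜ).Adj u ⟨z, hzS⟩ := huz
    exact Or.inr ⟨⟨z, hzS⟩, (connectedComponentMk_eq_of_adj hadj.symm).trans hu, rfl⟩

theorem statement3_general {V : Type*} (G : SimpleGraph V)
    (Cross : Sym2 V → Sym2 V → Prop)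
    (h2A : IsType2A G Cross)
    (S : Set V)
    (F : (G.induce (Sᶜ : Set V)).ConnectedComponent)
    (a b : (Sᶜ : Set V)) (ha : a ∈ F.supp) (hb : b ∈ F.supp)
    (x y : V)
    (hcross : Cross s((a : V), (b : V)) s(x, y)) :
    x ∈ S ∪ (Subtype.val '' F.supp) ∧ y ∈ S ∪ (Subtype.val '' F.supp) := by
  have mem_of_adj : ∀ z : V, G.Adj (a : V) z ∨ G.Adj (b : V) z →
      z ∈ S ∪ (Subtype.val '' F.supp) := by
    rintro z (haz | hbz)
    · exact F.mem_union_image_supp_of_adj ha haz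
    · exact F.mem_union_image_supp_of_adj hb hbz
  exact ⟨mem_of_adj x (h2A.adj_left_of_cross hcross),
    mem_of_adj y (h2A.adj_right_of_cross hcross)⟩

/-- for a vertex set `S` and a component `F` of `G − S`, if an edge `ab`
of `G` inside `F` crosses an edge `xy` of `G`, then both `x` and `y` lie in
`S ∪ V(F)`. -/
theorem statement3 {V : Type*} [Fintype V] (G : SimpleGraph V)
    (Cross : Sym2 V → Sym2 V → Prop)
    (hC : IsCrossingStructure G Cross) (h2A : IsType2A G Cross)
    (S : Set V)
    (F : (G.induce (Sᶜ : Set V)).ConnectedComponent)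
    (a b : (Sᶜ : Set V)) (ha : a ∈ F.supp) (hb : b ∈ F.supp)
    (hab : G.Adj (a : V) (b : V))
    (x y : V) (hxy : G.Adj x y)
    (hcross : Cross s((a : V), (b : V)) s(x, y)) :
    x ∈ S ∪ (Subtype.val '' F.supp) ∧ y ∈ S ∪ (Subtype.val '' F.supp) :=
  statement3_general G Cross h2A S F a b ha hb x y hcross
end

section
/- Let G be a finite connected simple graph equipped with a type-2A, 1-planar and nice crossing structure. Let R be a set of edges of G such that every edge in R is crossed and every crossing pair of edges contains exactly one edge of R. Then the spanning subgraph G − R obtained from G by deleting all edges in R is connected. -/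
theorem SimpleGraph.Preconnected.of_adj_reachable {V : Type*} {G H : SimpleGraph V}
    (hG : G.Preconnected) (h : ∀ u v, G.Adj u v → H.Reachable u v) : H.Preconnected := by
  intro u v
  have huv := hG u v
  rw [SimpleGraph.reachable_eq_reflTransGen] at huv h ⊢
  exact Relation.ReflTransGen.lift' id h u v huv

section Crossing

variable {V : Type*} {G : SimpleGraph V} {Cross : Sym2 V → Sym2 V → Prop} {a b c d : V}

theorem IsType2A.adj_left (h2A : IsType2A G Cross) (hcross : Cross s(a, b) s(c, d)) :
    G.Adj a c ∨ G.Adj a d := by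
  by_contra! hnot
  have hsub : AssocEdges G a b c d ⊆ {s(b, c), s(b, d)} := by
    rintro e ⟨he, hG⟩
    rcases he with rfl | rfl | rfl | rfl
    · exact absurd hG hnot.1
    · exact absurd hG hnot.2
    · exact Or.inl rfl
    · exact Or.inr rfl
  have hcard : (AssocEdges G a b c d).ncard = 2 := by
    refine le_antisymm ?_ (h2A a b c d hcross).1
    calc (AssocEdges G a b c d).ncard
        ≤ ({s(b, c), s(b, d)} : Set (Sym2 V)).ncard := Set.ncard_le_ncard hsub
      _ ≤ 2 := by simpa using Set.ncard_insert_le s(b, c) {s(b, d)}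
  rcases (h2A a b c d hcross).2 hcard with ⟨hac, -⟩ | ⟨had, -⟩
  · exact hnot.1 hac
  · exact hnot.2 had

theorem IsNice.notMem_of_mem_assocEdges (hnice : IsNice G Cross) {R : Set (Sym2 V)}
    (hR : ∀ e ∈ R, IsCrossed Cross e) (hcross : Cross s(a, b) s(c, d)) {e : Sym2 V}
    (he : e ∈ AssocEdges G a b c d) : e ∉ R := fun heR ↦
  let ⟨f, hef⟩ := hR e heR
  hnice a b c d hcross e he f hef

theorem IsType2A.deleteEdges_reachable_of_cross (h2A : IsType2A G Cross)
    (hnice : IsNice G Cross) {R : Set (Sym2 V)} (hR : ∀ e ∈ R, IsCrossed Cross e)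
    (hcross : Cross s(a, b) s(c, d)) (hcd : G.Adj c d) (hcdR : s(c, d) ∉ R) :
    (G.deleteEdges R).Reachable a c := by
  have hcd' : (G.deleteEdges R).Reachable c d :=
    (SimpleGraph.deleteEdges_adj.mpr ⟨hcd, hcdR⟩).reachable
  have hassoc {x : V} (hx : s(a, x) = s(a, c) ∨ s(a, x) = s(a, d)) (hax : G.Adj a x) :
      (G.deleteEdges R).Reachable a x := by
    refine (SimpleGraph.deleteEdges_adj.mpr ⟨hax, ?_⟩).reachable
    refine hnice.notMem_of_mem_assocEdges hR hcross ⟨?_, hax⟩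
    rcases hx with hx | hx <;> simp [hx]
  rcases h2A.adj_left hcross with hac | had
  · exact hassoc (Or.inl rfl) hac
  · exact (hassoc (Or.inr rfl) had).trans hcd'.symm

end Crossing

theorem statement6_general {V : Type*} (G : SimpleGraph V)
    (hGconn : G.Connected)
    (Cross : Sym2 V → Sym2 V → Prop)
    (hC : IsCrossingStructure G Cross) (h2A : IsType2A G Cross)
    (hnice : IsNice G Cross)
    (R : Set (Sym2 V))
    (hR1 : ∀ e ∈ R, IsCrossed Cross e)
    (hR2 : ∀ e f : Sym2 V, Cross e f → ((e ∈ R ∧ f ∉ R) ∨ (e ∉ R ∧ f ∈ R))) :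
    (G.deleteEdges R).Connected := by
  refine (SimpleGraph.connected_iff _).mpr ⟨hGconn.preconnected.of_adj_reachable ?_,
    hGconn.nonempty⟩
  intro a b hab
  by_cases habR : s(a, b) ∈ R
  · obtain ⟨f, hcross⟩ := hR1 _ habR
    induction f using Sym2.ind with
    | _ c d =>
    have hcd : G.Adj c d := (hC.edge_mem _ _ hcross).2
    have hcdR : s(c, d) ∉ R := by
      rcases hR2 _ _ hcross with ⟨-, h⟩ | ⟨h, -⟩
      · exact h
      · exact absurd habR h
    have hcross' : Cross s(b, a) s(c, d) := Sym2.eq_swap ▸ hcross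
    exact (h2A.deleteEdges_reachable_of_cross hnice hR1 hcross hcd hcdR).trans
      (h2A.deleteEdges_reachable_of_cross hnice hR1 hcross' hcd hcdR).symm
  · exact (SimpleGraph.deleteEdges_adj.mpr ⟨hab, habR⟩).reachable

/-- let `G` be connected with a type-2A, 1-planar, nice crossing structure, and
let `R` be a set of edges such that every edge of `R` is crossed and every crossing pair
contains exactly one edge of `R`. Then `G − R` is connected. -/
theorem statement6 {V : Type*} [Fintype V] (G : SimpleGraph V)
    (hGconn : G.Connected)
    (Cross : Sym2 V → Sym2 V → Prop)
    (hC : IsCrossingStructure G Cross) (h2A : IsType2A G Cross)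
    (h1p : IsOnePlanar Cross) (hnice : IsNice G Cross)
    (R : Set (Sym2 V))
    (hR1 : ∀ e ∈ R, IsCrossed Cross e)
    (hR2 : ∀ e f : Sym2 V, Cross e f → ((e ∈ R ∧ f ∉ R) ∨ (e ∉ R ∧ f ∈ R))) :
    (G.deleteEdges R).Connected :=
  statement6_general G hGconn Cross hC h2A hnice R hR1 hR2
end

section
/- (Tutte–Berge formula) Let G be a finite simple graph on n vertices. Then twice the maximum size of a matching of G equals the minimum, over all subsets S of the vertex set of G, of the quantity n − odd(G − S) + |S|, where odd(G − S) denotes the number of connected components of odd order of the subgraph of G induced on the complement of S. -/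
set_option maxHeartbeats 1600000

/-- A matching of a simple graph `G`: a set of edges of `G` such that no two distinct
edges of the set share a vertex. -/
def IsGraphMatching {V : Type*} (G : SimpleGraph V) (M : Set (Sym2 V)) : Prop :=
  M ⊆ G.edgeSet ∧ M.Pairwise (fun e f => ∀ v : V, v ∈ e → v ∉ f)

/-- The number of odd components of `G − S`, i.e. of connected components of the
subgraph of `G` induced on the complement of `S` having an odd number of vertices. -/
noncomputable def oddComponents {V : Type*} (G : SimpleGraph V) (S : Set V) : ℕ :=
  Set.ncard {C : (G.induce (Sᶜ : Set V)).ConnectedComponent | Odd C.supp.ncard}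

set_option linter.unusedSectionVars false

namespace TutteBerge

open SimpleGraph Set

variable {V : Type*} [Fintype V] {G : SimpleGraph V} {M N : Set (Sym2 V)}

/-- vertices covered by an edge set -/
def mcov (M : Set (Sym2 V)) : Set V := {v : V | ∃ e ∈ M, v ∈ e}

lemma mcov_mono {M N : Set (Sym2 V)} (h : M ⊆ N) : mcov M ⊆ mcov N :=
  fun _ ⟨e, he, hve⟩ => ⟨e, h he, hve⟩

lemma unique_edge (hM : IsGraphMatching G M) {e f : Sym2 V} (he : e ∈ M) (hf : f ∈ M)
    {v : V} (hve : v ∈ e) (hvf : v ∈ f) : e = f := by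
  by_contra h
  exact hM.2 he hf h v hve hvf

lemma not_diag (hM : IsGraphMatching G M) {e : Sym2 V} (he : e ∈ M) : ¬ e.IsDiag :=
  G.not_isDiag_of_mem_edgeSet (hM.1 he)

lemma pair_set {x y : V} : {v : V | v ∈ (s(x,y) : Sym2 V)} = {x, y} := by
  ext v; simp [Sym2.mem_iff]

lemma mcov_ncard (M : Set (Sym2 V)) : (∀ e ∈ M, ¬ e.IsDiag) →
    M.Pairwise (fun e f => ∀ v : V, v ∈ e → v ∉ f) → (mcov M).ncard = 2 * M.ncard := by
  refine Set.Finite.induction_on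
    (motive := fun s _ => (∀ e ∈ s, ¬ e.IsDiag) →
      s.Pairwise (fun e f => ∀ v : V, v ∈ e → v ∉ f) → (mcov s).ncard = 2 * s.ncard)
    M (Set.toFinite M) (by intro _ _; simp [mcov]) ?_
  intro a s ha _ ih hd hp
  have hcov : mcov (insert a s) = {v : V | v ∈ a} ∪ mcov s := by
    ext v; simp [mcov, or_and_right, exists_or]
  obtain ⟨x, y, rfl⟩ : ∃ x y, a = s(x,y) := ⟨a.out.1, a.out.2, (by rw [Sym2.mk, a.out_eq])⟩
  have hxy : x ≠ y := by simpa using hd _ (Set.mem_insert _ _)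
  have hdisj : Disjoint ({v : V | v ∈ (s(x,y) : Sym2 V)}) (mcov s) := by
    rw [Set.disjoint_left]
    rintro v hv ⟨e, he, hve⟩
    exact hp (Set.mem_insert _ _) (Set.mem_insert_of_mem _ he)
      (fun h => ha (h ▸ he)) v hv hve
  rw [hcov, Set.ncard_union_eq hdisj (Set.toFinite _) (Set.toFinite _), pair_set,
    Set.ncard_pair hxy, ih (fun e he => hd e (Set.mem_insert_of_mem _ he))
      (hp.mono (Set.subset_insert _ _)),
    Set.ncard_insert_of_notMem ha (Set.toFinite _)]
  ring

/-- maximum matching size -/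
noncomputable def matchNum (G : SimpleGraph V) : ℕ :=
  sSup {k : ℕ | ∃ M : Set (Sym2 V), IsGraphMatching G M ∧ M.ncard = k}

lemma bddAbove_matchSet :
    BddAbove {k : ℕ | ∃ M : Set (Sym2 V), IsGraphMatching G M ∧ M.ncard = k} := by
  refine ⟨(Set.univ : Set (Sym2 V)).ncard, ?_⟩
  rintro k ⟨M, _, rfl⟩
  exact Set.ncard_le_ncard (Set.subset_univ _) (Set.toFinite _)

lemma matchSet_nonempty :
    {k : ℕ | ∃ M : Set (Sym2 V), IsGraphMatching G M ∧ M.ncard = k}.Nonempty :=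
  ⟨0, ∅, ⟨Set.empty_subset _, Set.pairwise_empty _⟩, Set.ncard_empty _⟩

lemma exists_max_matching (G : SimpleGraph V) :
    ∃ M : Set (Sym2 V), IsGraphMatching G M ∧ M.ncard = matchNum G :=
  Nat.sSup_mem matchSet_nonempty bddAbove_matchSet

lemma le_matchNum (hM : IsGraphMatching G M) : M.ncard ≤ matchNum G :=
  le_csSup bddAbove_matchSet ⟨M, hM, rfl⟩


lemma exchange (hM : IsGraphMatching G M)
    (hmax : ∀ K : Set (Sym2 V), IsGraphMatching G K → K.ncard ≤ M.ncard) :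
    ∀ (k : ℕ) (N : Set (Sym2 V)) (w : V), (M \ N).ncard ≤ k →
      IsGraphMatching G N → N.ncard = M.ncard → w ∈ mcov M → w ∉ mcov N →
      ∃ (z : V) (M' : Set (Sym2 V)), z ∉ mcov M ∧ IsGraphMatching G M' ∧
        M'.ncard = M.ncard ∧ M' ⊆ M ∪ N ∧
        ∀ t : V, t ∈ mcov M' ↔ (t ∈ mcov M ∨ t = z) ∧ t ≠ w := by
  have symm2 : ∀ {e f : Sym2 V}, (∀ v : V, v ∈ e → v ∉ f) → (∀ v : V, v ∈ f → v ∉ e) :=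
    fun h v hvf hve => h v hve hvf
  intro k
  induction k with
  | zero =>
    intro N w hk hN hcard hw hw'
    have h0 : (M \ N) = ∅ := by
      rw [← Set.ncard_eq_zero (Set.toFinite _)]; omega
    have hMN : M ⊆ N := by
      intro e he
      by_contra h
      exact absurd (Set.mem_diff_of_mem he h) (h0 ▸ Set.notMem_empty e)
    have : M = N := Set.eq_of_subset_of_ncard_le hMN (le_of_eq hcard) (Set.toFinite _)
    exact absurd (this ▸ hw) hw'
  | succ k ih =>
    intro N w hk hN hcard hw hw'
    obtain ⟨e, heM, hwe⟩ := hw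
    obtain ⟨x, hex⟩ : ∃ x, s(w, x) = e := ⟨Sym2.Mem.other hwe, Sym2.other_spec hwe⟩
    have hxe : x ∈ e := by rw [← hex]; exact Sym2.mem_mk_right _ _
    have hxw : x ≠ w := by
      have := not_diag hM heM
      rw [← hex] at this
      simpa [Sym2.mk_isDiag_iff, eq_comm] using this
    have hxM : x ∈ mcov M := ⟨e, heM, hxe⟩
    have heN : e ∉ N := fun h => hw' ⟨e, h, hwe⟩
    have hxN : x ∈ mcov N := by
      by_contra hxN
      have hmatch : IsGraphMatching G (insert e N) := by
        refine ⟨Set.insert_subset (hM.1 heM) hN.1, Set.pairwise_insert.mpr ⟨hN.2, ?_⟩⟩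
        intro g hg _
        have h1 : ∀ v : V, v ∈ e → v ∉ g := by
          intro v hve hvg
          rw [← hex, Sym2.mem_iff] at hve
          rcases hve with rfl | rfl
          · exact hw' ⟨g, hg, hvg⟩
          · exact hxN ⟨g, hg, hvg⟩
        exact ⟨h1, symm2 h1⟩
      have := hmax _ hmatch
      rw [Set.ncard_insert_of_notMem heN (Set.toFinite _), hcard] at this
      omega
    obtain ⟨f, hfN, hxf⟩ := hxN
    obtain ⟨y, hfx⟩ : ∃ y, s(x, y) = f := ⟨Sym2.Mem.other hxf, Sym2.other_spec hxf⟩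
    have hyf : y ∈ f := by rw [← hfx]; exact Sym2.mem_mk_right _ _
    have hyx : y ≠ x := by
      have := not_diag hN hfN
      rw [← hfx] at this
      simpa [Sym2.mk_isDiag_iff, eq_comm] using this
    have hyw : y ≠ w := fun h => hw' ⟨f, hfN, h ▸ hyf⟩
    have hfe : f ≠ e := fun h => heN (h ▸ hfN)
    have hfM : f ∉ M := fun h => hfe (unique_edge hM h heM hxf hxe)
    have hmem_f : ∀ v : V, v ∈ f → v = x ∨ v = y := by
      intro v hv; rw [← hfx, Sym2.mem_iff] at hv; exact hv
    have hmem_e : ∀ v : V, v ∈ e → v = w ∨ v = x := by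
      intro v hv; rw [← hex, Sym2.mem_iff] at hv; exact hv
    by_cases hyM : y ∈ mcov M
    · -- recursive case
      set N₁ : Set (Sym2 V) := insert e (N \ {f}) with hN₁def
      have heN' : e ∉ N \ {f} := fun h => heN h.1
      have hN₁ : IsGraphMatching G N₁ := by
        refine ⟨Set.insert_subset (hM.1 heM) (Set.diff_subset.trans hN.1),
          Set.pairwise_insert.mpr ⟨hN.2.mono Set.diff_subset, ?_⟩⟩
        intro g hg _
        have h1 : ∀ v : V, v ∈ e → v ∉ g := by
          intro v hve hvg
          rcases hmem_e v hve with rfl | rfl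
          · exact hw' ⟨g, hg.1, hvg⟩
          · exact hg.2 (unique_edge hN hg.1 hfN hvg hxf)
        exact ⟨h1, symm2 h1⟩
      have hcard₁ : N₁.ncard = M.ncard := by
        rw [hN₁def, Set.ncard_insert_of_notMem heN' (Set.toFinite _),
          Set.ncard_diff_singleton_of_mem hfN]
        have : 0 < N.ncard := (Set.ncard_pos (Set.toFinite _)).mpr ⟨f, hfN⟩
        omega
      have hyN₁ : y ∉ mcov N₁ := by
        rintro ⟨g, hg, hyg⟩
        rcases Set.mem_insert_iff.mp hg with rfl | hg'
        · rcases hmem_e y hyg with rfl | rfl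
          · exact hyw rfl
          · exact hyx rfl
        · exact hg'.2 (unique_edge hN hg'.1 hfN hyg hyf)
      have hsub₁ : M \ N₁ ⊆ (M \ N) \ {e} := by
        rintro g ⟨hgM, hgN₁⟩
        have hge : g ≠ e := fun h => hgN₁ (h ▸ Set.mem_insert e _)
        refine ⟨⟨hgM, fun hgN => ?_⟩, hge⟩
        have hgf : g ≠ f := fun h => hfM (h ▸ hgM)
        exact hgN₁ (Set.mem_insert_of_mem _ ⟨hgN, hgf⟩)
      have hk₁ : (M \ N₁).ncard ≤ k := by
        have h1 := Set.ncard_le_ncard hsub₁ (Set.toFinite _)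
        have h2 : ((M \ N) \ {e}).ncard = (M \ N).ncard - 1 :=
          Set.ncard_diff_singleton_of_mem ⟨heM, heN⟩
        have h3 : 0 < (M \ N).ncard := (Set.ncard_pos (Set.toFinite _)).mpr ⟨e, heM, heN⟩
        omega
      obtain ⟨z₁, M'₁, hz₁, hM'₁, hcard'₁, hsub'₁, hchar₁⟩ :=
        ih N₁ y hk₁ hN₁ hcard₁ hyM hyN₁
      have hzw : z₁ ≠ w := fun h => hz₁ (h ▸ ⟨e, heM, hwe⟩)
      -- x is covered in M'₁ and its edge must be e
      have hxM'₁ : x ∈ mcov M'₁ := (hchar₁ x).mpr ⟨Or.inl hxM, hyx.symm⟩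
      have heM'₁ : e ∈ M'₁ := by
        obtain ⟨g, hg, hxg⟩ := hxM'₁
        rcases hsub'₁ hg with hgM | hgN₁
        · exact (unique_edge hM hgM heM hxg hxe) ▸ hg
        · rcases Set.mem_insert_iff.mp hgN₁ with rfl | hg'
          · exact hg
          · exact absurd (unique_edge hN hg'.1 hfN hxg hxf) hg'.2
      have hyM'₁ : y ∉ mcov M'₁ := fun h => ((hchar₁ y).mp h).2 rfl
      have hfM'₁ : f ∉ M'₁ \ {e} := fun h => hyM'₁ ⟨f, h.1, hyf⟩
      have hwuniq : ∀ g ∈ M'₁, w ∈ g → g = e := by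
        intro g hg hwg
        rcases hsub'₁ hg with hgM | hgN₁
        · exact unique_edge hM hgM heM hwg hwe
        · rcases Set.mem_insert_iff.mp hgN₁ with rfl | hg'
          · rfl
          · exact absurd ⟨g, hg'.1, hwg⟩ hw'
      have hxuniq : ∀ g ∈ M'₁, x ∈ g → g = e := by
        intro g hg hxg
        rcases hsub'₁ hg with hgM | hgN₁
        · exact unique_edge hM hgM heM hxg hxe
        · rcases Set.mem_insert_iff.mp hgN₁ with rfl | hg'
          · rfl
          · exact absurd (unique_edge hN hg'.1 hfN hxg hxf) hg'.2
      refine ⟨z₁, insert f (M'₁ \ {e}), hz₁, ?_, ?_, ?_, ?_⟩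
      · refine ⟨Set.insert_subset (hN.1 hfN) (Set.diff_subset.trans hM'₁.1),
          Set.pairwise_insert.mpr ⟨hM'₁.2.mono Set.diff_subset, ?_⟩⟩
        intro g hg _
        have h1 : ∀ v : V, v ∈ f → v ∉ g := by
          intro v hv hvg
          rcases hmem_f v hv with rfl | rfl
          · exact hg.2 (hxuniq g hg.1 hvg)
          · exact hyM'₁ ⟨g, hg.1, hvg⟩
        exact ⟨h1, symm2 h1⟩
      · rw [Set.ncard_insert_of_notMem hfM'₁ (Set.toFinite _),
          Set.ncard_diff_singleton_of_mem heM'₁, hcard'₁]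
        have : 0 < M.ncard := (Set.ncard_pos (Set.toFinite _)).mpr ⟨e, heM⟩
        omega
      · refine Set.insert_subset (Set.mem_union_right _ hfN) ?_
        refine Set.diff_subset.trans (hsub'₁.trans ?_)
        rintro g (hgM | hgN₁)
        · exact Set.mem_union_left _ hgM
        · rcases Set.mem_insert_iff.mp hgN₁ with rfl | hg'
          · exact Set.mem_union_left _ heM
          · exact Set.mem_union_right _ hg'.1
      · intro t
        constructor
        · rintro ⟨g, hg, htg⟩
          rcases Set.mem_insert_iff.mp hg with rfl | hg'
          · rcases hmem_f t htg with rfl | rfl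
            · exact ⟨Or.inl hxM, hxw⟩
            · exact ⟨Or.inl hyM, hyw⟩
          · have htw : t ≠ w := fun h => hg'.2 (hwuniq g hg'.1 (h ▸ htg))
            have := (hchar₁ t).mp ⟨g, hg'.1, htg⟩
            exact ⟨this.1, htw⟩
        · rintro ⟨h1, htw⟩
          by_cases hty : t = y
          · exact ⟨f, Set.mem_insert _ _, hty ▸ hyf⟩
          · have : t ∈ mcov M'₁ := (hchar₁ t).mpr ⟨h1, hty⟩
            obtain ⟨g, hg, htg⟩ := this
            by_cases hge : g = e
            · subst hge
              rcases hmem_e t htg with rfl | rfl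
              · exact absurd rfl htw
              · exact ⟨f, Set.mem_insert _ _, hxf⟩
            · exact ⟨g, Set.mem_insert_of_mem _ ⟨hg, hge⟩, htg⟩
    · -- direct case: y is M-uncovered
      have hfM' : f ∉ M \ {e} := fun h => hfM h.1
      refine ⟨y, insert f (M \ {e}), hyM, ?_, ?_, ?_, ?_⟩
      · refine ⟨Set.insert_subset (hN.1 hfN) (Set.diff_subset.trans hM.1),
          Set.pairwise_insert.mpr ⟨hM.2.mono Set.diff_subset, ?_⟩⟩
        intro g hg _
        have h1 : ∀ v : V, v ∈ f → v ∉ g := by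
          intro v hv hvg
          rcases hmem_f v hv with rfl | rfl
          · exact hg.2 (unique_edge hM hg.1 heM hvg hxe)
          · exact hyM ⟨g, hg.1, hvg⟩
        exact ⟨h1, symm2 h1⟩
      · rw [Set.ncard_insert_of_notMem hfM' (Set.toFinite _),
          Set.ncard_diff_singleton_of_mem heM]
        have : 0 < M.ncard := (Set.ncard_pos (Set.toFinite _)).mpr ⟨e, heM⟩
        omega
      · exact Set.insert_subset (Set.mem_union_right _ hfN)
          (Set.diff_subset.trans Set.subset_union_left)
      · intro t
        constructor
        · rintro ⟨g, hg, htg⟩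
          rcases Set.mem_insert_iff.mp hg with rfl | hg'
          · rcases hmem_f t htg with rfl | rfl
            · exact ⟨Or.inl hxM, hxw⟩
            · exact ⟨Or.inr rfl, hyw⟩
          · refine ⟨Or.inl ⟨g, hg'.1, htg⟩, fun h => ?_⟩
            exact hg'.2 (unique_edge hM hg'.1 heM (h ▸ htg) hwe)
        · rintro ⟨h1 | rfl, htw⟩
          · obtain ⟨g, hg, htg⟩ := h1
            by_cases hge : g = e
            · subst hge
              rcases hmem_e t htg with rfl | rfl
              · exact absurd rfl htw
              · exact ⟨f, Set.mem_insert _ _, hxf⟩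
            · exact ⟨g, Set.mem_insert_of_mem _ ⟨hg, hge⟩, htg⟩
          · exact ⟨f, Set.mem_insert _ _, hyf⟩


lemma gallai (havoid : ∀ v : V, ∃ N : Set (Sym2 V),
      IsGraphMatching G N ∧ N.ncard = matchNum G ∧ v ∉ mcov N) :
    ∀ (M : Set (Sym2 V)) (u v : V), IsGraphMatching G M → M.ncard = matchNum G →
      u ∉ mcov M → v ∉ mcov M → u ≠ v → ¬ G.Reachable u v := by
  by_contra hcon
  push_neg at hcon
  set D : Set ℕ := {d : ℕ | ∃ (M : Set (Sym2 V)) (u v : V), IsGraphMatching G M ∧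
    M.ncard = matchNum G ∧ u ∉ mcov M ∧ v ∉ mcov M ∧ u ≠ v ∧ G.Reachable u v ∧
    G.dist u v = d} with hD
  have hDne : D.Nonempty := by
    obtain ⟨M, u, v, h1, h2, h3, h4, h5, h6⟩ := hcon
    exact ⟨G.dist u v, M, u, v, h1, h2, h3, h4, h5, h6, rfl⟩
  obtain ⟨M, u, v, hM, hMcard, huM, hvM, huv, hreach, hdist⟩ := Nat.sInf_mem hDne
  set d₀ := sInf D with hd₀
  have hd₀pos : 0 < d₀ := hdist ▸ hreach.pos_dist_of_ne huv
  have hmax : ∀ K : Set (Sym2 V), IsGraphMatching G K → K.ncard ≤ M.ncard := by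
    intro K hK; rw [hMcard]; exact le_matchNum hK
  by_cases hd1 : d₀ = 1
  · -- u, v adjacent, both uncovered: bigger matching
    obtain ⟨p, hp⟩ := hreach.exists_walk_length_eq_dist
    have hadj : G.Adj u v := Walk.adj_of_length_eq_one (by rw [hp, hdist, hd1])
    have hne : s(u, v) ∉ M := fun h => huM ⟨_, h, Sym2.mem_mk_left _ _⟩
    have hmatch : IsGraphMatching G (insert s(u, v) M) := by
      refine ⟨Set.insert_subset (G.mem_edgeSet.mpr hadj) hM.1,
        Set.pairwise_insert.mpr ⟨hM.2, ?_⟩⟩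
      intro g hg _
      have h1 : ∀ t : V, t ∈ s(u, v) → t ∉ g := by
        intro t ht htg
        rcases Sym2.mem_iff.mp ht with rfl | rfl
        · exact huM ⟨g, hg, htg⟩
        · exact hvM ⟨g, hg, htg⟩
      exact ⟨h1, fun t htg hts => h1 t hts htg⟩
    have := hmax _ hmatch
    rw [Set.ncard_insert_of_notMem hne (Set.toFinite _)] at this
    omega
  · have hd2 : 2 ≤ d₀ := by omega
    obtain ⟨p, hp⟩ := hreach.exists_walk_length_eq_dist
    rw [hdist] at hp
    cases p with
    | nil => rw [Walk.length_nil] at hp; omega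
    | cons hadj q =>
      rename_i w
      rw [Walk.length_cons] at hp
      have hwu : w ≠ u := hadj.ne'
      have hdistuw : G.dist u w ≤ 1 := dist_le (Walk.cons hadj Walk.nil)
      have hwv : w ≠ v := by
        intro h
        rw [h, hdist] at hdistuw
        omega
      have hdistwv : G.dist w v ≤ d₀ - 1 := by
        have := dist_le q
        omega
      by_cases hwM : w ∈ mcov M
      · obtain ⟨N, hN, hNcard, hwN⟩ := havoid w
        obtain ⟨z, M', hz, hM', hM'card, _, hchar⟩ :=
          exchange hM hmax (M \ N).ncard N w le_rfl hN (hNcard.trans hMcard.symm) hwM hwN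
        have hwM' : w ∉ mcov M' := fun h => ((hchar w).mp h).2 rfl
        by_cases huz : u = z
        · have hvz : v ≠ z := fun h => huv (huz.trans h.symm)
          have hvM' : v ∉ mcov M' := by
            intro h
            rcases ((hchar v).mp h).1 with h' | h'
            · exact hvM h'
            · exact hvz h'
          have hmem : G.dist w v ∈ D :=
            ⟨M', w, v, hM', hM'card.trans hMcard, hwM', hvM', hwv, q.reachable, rfl⟩
          have := Nat.sInf_le hmem
          omega
        · have huM' : u ∉ mcov M' := by
            intro h
            rcases ((hchar u).mp h).1 with h' | h'
            · exact huM h'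
            · exact huz h'
          have hmem : G.dist u w ∈ D :=
            ⟨M', u, w, hM', hM'card.trans hMcard, huM', hwM', fun h => hwu h.symm,
              hadj.reachable, rfl⟩
          have := Nat.sInf_le hmem
          omega
      · have hmem : G.dist u w ∈ D :=
          ⟨M, u, w, hM, hMcard, huM, hwM, fun h => hwu h.symm, hadj.reachable, rfl⟩
        have := Nat.sInf_le hmem
        omega


/-- support of a component of `G.induce Sᶜ`, as a subset of `V`. -/
def suppV (G : SimpleGraph V) (S : Set V) (C : (G.induce (Sᶜ : Set V)).ConnectedComponent) :
    Set V := Subtype.val '' C.supp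

lemma mem_suppV {S : Set V} {C : (G.induce (Sᶜ : Set V)).ConnectedComponent} {x : V} :
    x ∈ suppV G S C ↔ ∃ hx : x ∈ (Sᶜ : Set V),
      (G.induce (Sᶜ : Set V)).connectedComponentMk ⟨x, hx⟩ = C := by
  constructor
  · rintro ⟨⟨x', hx'⟩, hmem, rfl⟩
    exact ⟨hx', hmem⟩
  · rintro ⟨hx, hC⟩
    exact ⟨⟨x, hx⟩, hC, rfl⟩

lemma suppV_subset {S : Set V} {C : (G.induce (Sᶜ : Set V)).ConnectedComponent} :
    suppV G S C ⊆ (Sᶜ : Set V) := by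
  rintro x ⟨⟨x', hx'⟩, _, rfl⟩; exact hx'

lemma suppV_det {S : Set V} {C C' : (G.induce (Sᶜ : Set V)).ConnectedComponent} {x : V}
    (h : x ∈ suppV G S C) (h' : x ∈ suppV G S C') : C = C' := by
  obtain ⟨hx, hC⟩ := mem_suppV.mp h
  obtain ⟨hx', hC'⟩ := mem_suppV.mp h'
  exact hC ▸ hC' ▸ rfl

lemma suppV_ncard {S : Set V} (C : (G.induce (Sᶜ : Set V)).ConnectedComponent) :
    (suppV G S C).ncard = C.supp.ncard :=
  Set.ncard_image_of_injective _ Subtype.val_injective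

lemma suppV_adj {S : Set V} {C : (G.induce (Sᶜ : Set V)).ConnectedComponent} {x y : V}
    (hx : x ∈ suppV G S C) (hadj : G.Adj x y) (hy : y ∈ (Sᶜ : Set V)) :
    y ∈ suppV G S C := by
  obtain ⟨hx', hC⟩ := mem_suppV.mp hx
  refine mem_suppV.mpr ⟨hy, ?_⟩
  have hadj' : (G.induce (Sᶜ : Set V)).Adj ⟨y, hy⟩ ⟨x, hx'⟩ := by simpa using hadj.symm
  rw [← hC]
  exact ConnectedComponent.connectedComponentMk_eq_of_adj hadj'


lemma part (hM : IsGraphMatching G M) (A : Set V)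
    (hclose : ∀ e ∈ M, ∀ x, x ∈ e → x ∈ A → ∀ y, y ∈ e → y ∈ A) :
    A.ncard = 2 * {e | e ∈ M ∧ ∃ x, x ∈ e ∧ x ∈ A}.ncard + (A \ mcov M).ncard := by
  set MC : Set (Sym2 V) := {e | e ∈ M ∧ ∃ x, x ∈ e ∧ x ∈ A} with hMC
  have h1 : A ∩ mcov M = mcov MC := by
    ext x
    constructor
    · rintro ⟨hxA, e, he, hxe⟩
      exact ⟨e, ⟨he, x, hxe, hxA⟩, hxe⟩
    · rintro ⟨e, ⟨heM, x₀, hx₀e, hx₀A⟩, hxe⟩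
      exact ⟨hclose e heM x₀ hx₀e hx₀A x hxe, e, heM, hxe⟩
  have h2 : (A ∩ mcov M).ncard + (A \ mcov M).ncard = A.ncard :=
    Set.ncard_inter_add_ncard_diff_eq_ncard A (mcov M) (Set.toFinite _)
  have h3 : (mcov MC).ncard = 2 * MC.ncard :=
    mcov_ncard MC (fun e he => G.not_isDiag_of_mem_edgeSet (hM.1 he.1))
      (hM.2.mono (fun e he => he.1))
  rw [h1, h3] at h2
  omega

lemma oddcomp_le (G : SimpleGraph V) (S : Set V) :
    oddComponents G S ≤ Fintype.card V := by
  classical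
  refine le_trans (Set.ncard_le_ncard_of_injOn
    (s := {C : (G.induce (Sᶜ : Set V)).ConnectedComponent | Odd C.supp.ncard})
    (t := Set.univ)
    (fun C => (C.exists_rep.choose : V)) (fun C _ => Set.mem_univ _) ?_ (Set.toFinite _)) ?_
  · intro C hC C' hC' h
    have h1 := C.exists_rep.choose_spec
    have h2 := C'.exists_rep.choose_spec
    rw [← h1, ← h2, Subtype.val_injective h]
  · rw [Set.ncard_univ, Nat.card_eq_fintype_card]

lemma easy (S : Set V) (hM : IsGraphMatching G M) :
    2 * M.ncard + oddComponents G S ≤ Fintype.card V + S.ncard := by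
  classical
  have hcovcard : (mcov M).ncard = 2 * M.ncard :=
    mcov_ncard M (fun e he => G.not_isDiag_of_mem_edgeSet (hM.1 he)) hM.2
  have hcompl : (mcov M).ncard + (mcov M)ᶜ.ncard = Fintype.card V := by
    rw [Set.ncard_add_ncard_compl _ (Set.toFinite _), Nat.card_eq_fintype_card]
  set Odds := {C : (G.induce (Sᶜ : Set V)).ConnectedComponent | Odd C.supp.ncard} with hOdds
  have hoc : oddComponents G S = Odds.ncard := rfl
  rcases Odds.eq_empty_or_nonempty with hO | hO
  · rw [hoc, hO, Set.ncard_empty]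
    omega
  obtain ⟨C₀, _⟩ := hO
  obtain ⟨v₀, _⟩ := C₀.exists_rep
  haveI : Nonempty V := ⟨v₀⟩
  set P : (G.induce (Sᶜ : Set V)).ConnectedComponent → V → Prop := fun C x =>
    (x ∈ suppV G S C ∧ x ∉ mcov M) ∨
    (x ∈ S ∧ ∃ e ∈ M, x ∈ e ∧ ∃ y, y ∈ e ∧ y ∈ suppV G S C) with hP
  have hex : ∀ C ∈ Odds, ∃ x, P C x := by
    intro C hC
    by_cases hall : ∀ e ∈ M, ∀ x, x ∈ e → x ∈ suppV G S C → ∀ y, y ∈ e → y ∈ suppV G S C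
    · have hpart := part hM (suppV G S C) hall
      have hodd : Odd (suppV G S C).ncard := by rw [suppV_ncard]; exact hC
      have hne : (suppV G S C \ mcov M).ncard ≠ 0 := by
        intro h
        rw [h] at hpart
        rw [hpart] at hodd
        simp only [Nat.add_zero] at hodd
        exact (Nat.not_odd_iff_even.mpr (even_two_mul _)) hodd
      obtain ⟨x, hx⟩ := Set.nonempty_of_ncard_ne_zero hne
      exact ⟨x, Or.inl ⟨hx.1, hx.2⟩⟩
    · push_neg at hall
      obtain ⟨e, heM, x, hxe, hxC, y, hye, hyC⟩ := hall
      have hxy : x ≠ y := fun h => hyC (h ▸ hxC)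
      have hadj : G.Adj x y := by
        have : (s(x, y) : Sym2 V) = e := ((Sym2.mem_and_mem_iff hxy).mp ⟨hxe, hye⟩).symm
        exact G.mem_edgeSet.mp (this ▸ hM.1 heM)
      have hyS : y ∈ S := by
        by_contra hyS
        exact hyC (suppV_adj hxC hadj hyS)
      exact ⟨y, Or.inr ⟨hyS, e, heM, hye, x, hxe, hxC⟩⟩
  set f : (G.induce (Sᶜ : Set V)).ConnectedComponent → V := fun C =>
    if h : ∃ x, P C x then h.choose else Classical.arbitrary V with hf
  have hfP : ∀ C ∈ Odds, P C (f C) := by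
    intro C hC
    have h := hex C hC
    simp only [hf, dif_pos h]
    exact h.choose_spec
  have hmapsto : ∀ C ∈ Odds, f C ∈ ((mcov M)ᶜ ∩ (Sᶜ : Set V)) ∪ S := by
    intro C hC
    rcases hfP C hC with ⟨h1, h2⟩ | ⟨h1, _⟩
    · exact Or.inl ⟨h2, suppV_subset h1⟩
    · exact Or.inr h1
  have hinj : Set.InjOn f Odds := by
    intro C hC C' hC' heq
    rcases hfP C hC with ⟨h1, h2⟩ | ⟨h1, e, heM, hxe, y, hye, hyC⟩ <;>
      rcases heq ▸ hfP C' hC' with ⟨h1', h2'⟩ | ⟨h1', e', heM', hxe', y', hye', hyC'⟩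
    · exact suppV_det h1 (heq ▸ h1')
    · exact absurd ⟨e', heM', heq ▸ hxe'⟩ h2
    · exact absurd ⟨e, heM, heq.symm ▸ hxe⟩ h2'
    · -- both S-form: same edge, same other endpoint
      have hee : e = e' := unique_edge hM heM heM' hxe (heq ▸ hxe')
      subst hee
      have hyx : y ≠ f C := fun h => (suppV_subset hyC) (h ▸ h1)
      have hyx' : y' ≠ f C := fun h => (suppV_subset hyC') (h ▸ heq ▸ h1')
      have : y = y' := by
        obtain ⟨o, ho⟩ : ∃ o, s(f C, o) = e := ⟨Sym2.Mem.other hxe, Sym2.other_spec hxe⟩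
        rw [← ho, Sym2.mem_iff] at hye
        rw [← ho, Sym2.mem_iff] at hye'
        rcases hye with rfl | rfl
        · exact absurd rfl hyx
        · rcases hye' with h | h
          · exact absurd (heq.symm ▸ h) hyx'
          · exact h.symm
      exact suppV_det hyC (this ▸ hyC')
  have hle := Set.ncard_le_ncard_of_injOn f hmapsto hinj (Set.toFinite _)
  have hle2 : (((mcov M)ᶜ ∩ (Sᶜ : Set V)) ∪ S).ncard ≤
      ((mcov M)ᶜ ∩ (Sᶜ : Set V)).ncard + S.ncard := Set.ncard_union_le _ _
  have hle3 : ((mcov M)ᶜ ∩ (Sᶜ : Set V)).ncard ≤ (mcov M)ᶜ.ncard :=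
    Set.ncard_le_ncard Set.inter_subset_left (Set.toFinite _)
  rw [hoc]
  omega


lemma odd_count_congr {W : Type*} (H H' : SimpleGraph W) (h : H = H') :
    Set.ncard {C : H.ConnectedComponent | Odd C.supp.ncard} =
      Set.ncard {C : H'.ConnectedComponent | Odd C.supp.ncard} := by
  subst h; rfl

lemma odd_isolated_general (H : SimpleGraph V) (A B : Set V) (v : V) (hvA : v ∈ A)
    (hB : B = A \ {v}) (hiso : ∀ u, ¬ H.Adj v u) :
    Set.ncard {C : (H.induce A).ConnectedComponent | Odd C.supp.ncard} =
      Set.ncard {C : (H.induce B).ConnectedComponent | Odd C.supp.ncard} + 1 := by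
  classical
  have hBA : B ⊆ A := hB ▸ Set.diff_subset
  have hvB : v ∉ B := hB ▸ fun h => h.2 rfl
  have hBmem : ∀ x : V, x ∈ B ↔ x ∈ A ∧ x ≠ v := by
    intro x; rw [hB]; simp
  set ι : H.induce B →g H.induce A := (H.induceHomOfLE hBA).toHom with hιdef
  have hι : ∀ b : ↥B, ((ι b : ↥A) : V) = (b : V) := fun b => rfl
  set φ : (H.induce B).ConnectedComponent → (H.induce A).ConnectedComponent :=
    ConnectedComponent.map ι with hφdef
  have hadj_ne : ∀ (x y : ↥A), (H.induce A).Adj x y → (x : V) ≠ v := by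
    intro x y hxy h
    have : H.Adj (x : V) (y : V) := by simpa using hxy
    exact hiso y (h ▸ this)
  -- reachability transfer
  have key : ∀ (x y : ↥A), (H.induce A).Reachable x y →
      ∀ (hx : (x : V) ∈ B) (hy : (y : V) ∈ B),
      (H.induce B).Reachable ⟨(x : V), hx⟩ ⟨(y : V), hy⟩ := by
    intro x y hxy
    rw [reachable_iff_reflTransGen] at hxy
    induction hxy with
    | refl => intro hx hy; rfl
    | tail hab hbc ihs =>
      rename_i b c
      intro hx hy
      have hbv : (b : V) ≠ v := hadj_ne b c hbc
      have hbB : (b : V) ∈ B := (hBmem _).mpr ⟨b.2, hbv⟩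
      have h2 : (H.induce B).Adj ⟨(b : V), hbB⟩ ⟨(c : V), hy⟩ := by
        simpa using hbc
      exact (ihs hx hbB).trans h2.reachable
  have key' : ∀ (b d : ↥B), (H.induce A).Reachable (ι b) (ι d) →
      (H.induce B).Reachable b d := by
    intro b d h
    have := key _ _ h ((hι b) ▸ b.2) ((hι d) ▸ d.2)
    convert this using 2 <;> exact Subtype.ext rfl
  have hφmk : ∀ (b : ↥B), φ ((H.induce B).connectedComponentMk b) =
      (H.induce A).connectedComponentMk (ι b) := fun b => rfl
  have hφinj : Function.Injective φ := by
    intro C D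
    induction C using SimpleGraph.ConnectedComponent.ind with | _ b =>
    induction D using SimpleGraph.ConnectedComponent.ind with | _ d =>
    intro h
    rw [hφmk, hφmk] at h
    exact ConnectedComponent.sound (key' b d (ConnectedComponent.exact h))
  set compv : (H.induce A).ConnectedComponent :=
    (H.induce A).connectedComponentMk ⟨v, hvA⟩ with hcompv
  have hreachv : ∀ u : ↥A, (H.induce A).Reachable ⟨v, hvA⟩ u → u = ⟨v, hvA⟩ := by
    intro u hu
    rw [reachable_iff_reflTransGen] at hu
    rcases Relation.ReflTransGen.cases_head hu with h | ⟨c, hc, _⟩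
    · exact h.symm
    · exact absurd (by simpa using hc : H.Adj v (c : V)) (hiso _)
  have hsuppv : compv.supp = {(⟨v, hvA⟩ : ↥A)} := by
    ext u
    simp only [ConnectedComponent.mem_supp_iff, Set.mem_singleton_iff]
    constructor
    · intro h
      exact hreachv u (ConnectedComponent.exact h.symm)
    · rintro rfl; rfl
  have hmkv : ∀ u : ↥A, (u : V) = v →
      (H.induce A).connectedComponentMk u = compv := by
    intro u hu
    rw [hcompv]
    congr 1
    exact Subtype.ext hu
  have hφv : ∀ C, φ C ≠ compv := by
    intro C
    induction C using SimpleGraph.ConnectedComponent.ind with | _ b =>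
    intro h
    rw [hφmk] at h
    have h2 : (ι b) ∈ compv.supp := h
    rw [hsuppv] at h2
    have h3 : ((ι b : ↥A) : V) = v := congrArg Subtype.val h2
    rw [hι] at h3
    exact hvB (h3 ▸ b.2)
  have hsupp : ∀ C : (H.induce B).ConnectedComponent,
      Subtype.val '' (φ C).supp = Subtype.val '' C.supp := by
    intro C
    induction C using SimpleGraph.ConnectedComponent.ind with | _ b =>
    ext x
    constructor
    · rintro ⟨u, hu, rfl⟩
      have huv : (u : V) ≠ v := by
        intro h
        apply hφv ((H.induce B).connectedComponentMk b)
        rw [ConnectedComponent.mem_supp_iff] at hu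
        rw [← hu]
        exact hmkv u h
      have huB : (u : V) ∈ B := (hBmem _).mpr ⟨u.2, huv⟩
      rw [ConnectedComponent.mem_supp_iff, hφmk] at hu
      have hr := key' ⟨(u : V), huB⟩ b
        (by convert ConnectedComponent.exact hu using 2 <;> try exact Subtype.ext rfl)
      exact ⟨⟨(u : V), huB⟩, ConnectedComponent.sound hr, rfl⟩
    · rintro ⟨b', hb', rfl⟩
      refine ⟨ι b', ?_, hι b'⟩
      rw [ConnectedComponent.mem_supp_iff] at hb' ⊢
      rw [← hb', hφmk]
  have hsuppcard : ∀ C : (H.induce B).ConnectedComponent,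
      (φ C).supp.ncard = C.supp.ncard := by
    intro C
    have h1 := Set.ncard_image_of_injective (φ C).supp (Subtype.val_injective (p := (· ∈ A)))
    have h2 := Set.ncard_image_of_injective C.supp (Subtype.val_injective (p := (· ∈ B)))
    rw [← h1, ← h2, hsupp]
  have hseteq : {C : (H.induce A).ConnectedComponent | Odd C.supp.ncard} =
      insert compv (φ '' {C : (H.induce B).ConnectedComponent | Odd C.supp.ncard}) := by
    ext C
    induction C using SimpleGraph.ConnectedComponent.ind with | _ a =>
    simp only [Set.mem_setOf_eq, Set.mem_insert_iff, Set.mem_image]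
    constructor
    · intro hC
      by_cases hCv : (H.induce A).connectedComponentMk a = compv
      · exact Or.inl hCv
      · right
        have hav : (a : V) ≠ v := fun h => hCv (hmkv a h)
        have haB : (a : V) ∈ B := (hBmem _).mpr ⟨a.2, hav⟩
        have hφa : φ ((H.induce B).connectedComponentMk ⟨(a : V), haB⟩) =
            (H.induce A).connectedComponentMk a := by
          rw [hφmk]
          congr 1
          try exact Subtype.ext (hι _)
        refine ⟨(H.induce B).connectedComponentMk ⟨(a : V), haB⟩, ?_, hφa⟩
        show Odd _
        rw [← hsuppcard, hφa]
        exact hC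
    · rintro (h | ⟨D, hD, hDe⟩)
      · rw [h, hsuppv, Set.ncard_singleton]
        exact odd_one
      · rw [← hDe, hsuppcard]
        exact hD
  rw [hseteq, Set.ncard_insert_of_notMem (by rintro ⟨D, _, hD⟩; exact hφv D hD)
    (Set.toFinite _), Set.ncard_image_of_injective _ hφinj]

lemma odd_isolated (H : SimpleGraph V) (T : Set V) (v : V) (hvT : v ∉ T)
    (hiso : ∀ u, ¬ H.Adj v u) :
    oddComponents H T = oddComponents H (insert v T) + 1 := by
  have h : ((insert v T)ᶜ : Set V) = (Tᶜ : Set V) \ {v} := by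
    ext x; simp [not_or, and_comm]
  exact odd_isolated_general H (Tᶜ) ((insert v T)ᶜ) v hvT h hiso


/-- the graph with all edges at `v` removed -/
def eraseV (G : SimpleGraph V) (v : V) : SimpleGraph V where
  Adj a b := G.Adj a b ∧ a ≠ v ∧ b ≠ v
  symm := ⟨fun a b ⟨h1, h2, h3⟩ => ⟨h1.symm, h3, h2⟩⟩
  loopless := ⟨fun a ⟨h, _, _⟩ => G.loopless.irrefl a h⟩

lemma eraseV_edgeSet {v : V} {e : Sym2 V} :
    e ∈ (eraseV G v).edgeSet ↔ e ∈ G.edgeSet ∧ v ∉ e := by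
  induction e using Sym2.ind with | _ a b =>
  rw [mem_edgeSet, mem_edgeSet]
  show G.Adj a b ∧ a ≠ v ∧ b ≠ v ↔ _
  simp only [Sym2.mem_iff, not_or]
  constructor
  · rintro ⟨h1, h2, h3⟩
    exact ⟨h1, fun h => h2 h.symm, fun h => h3 h.symm⟩
  · rintro ⟨h1, h2, h3⟩
    exact ⟨h1, fun h => h2 h.symm, fun h => h3 h.symm⟩

lemma eraseV_matching {v : V} {K : Set (Sym2 V)} :
    IsGraphMatching (eraseV G v) K ↔ IsGraphMatching G K ∧ ∀ e ∈ K, v ∉ e := by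
  constructor
  · intro h
    exact ⟨⟨fun e he => (eraseV_edgeSet.mp (h.1 he)).1, h.2⟩,
      fun e he => (eraseV_edgeSet.mp (h.1 he)).2⟩
  · intro h
    exact ⟨fun e he => eraseV_edgeSet.mpr ⟨h.1.1 he, h.2 e he⟩, h.1.2⟩

lemma induce_eraseV {S : Set V} {v : V} (hv : v ∈ S) :
    G.induce (Sᶜ : Set V) = (eraseV G v).induce (Sᶜ : Set V) := by
  ext ⟨a, ha⟩ ⟨b, hb⟩
  show G.Adj a b ↔ G.Adj a b ∧ a ≠ v ∧ b ≠ v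
  constructor
  · intro h
    exact ⟨h, fun hh => ha (hh ▸ hv), fun hh => hb (hh ▸ hv)⟩
  · exact And.left

lemma hard : ∀ (m : ℕ) (G : SimpleGraph V), G.edgeSet.ncard ≤ m →
    ∃ S : Set V, Fintype.card V - oddComponents G S + S.ncard ≤ 2 * matchNum G := by
  intro m
  induction m using Nat.strong_induction_on with
  | _ m ih =>
  intro G hG
  obtain ⟨M₀, hM₀, hM₀card⟩ := exists_max_matching G
  by_cases hA : ∃ v : V, ∀ K : Set (Sym2 V), IsGraphMatching G K → K.ncard = matchNum G →
      ∃ e ∈ K, v ∈ e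
  · -- a vertex covered by every maximum matching
    obtain ⟨v, hv⟩ := hA
    obtain ⟨e₀, he₀, hve₀⟩ := hv M₀ hM₀ hM₀card
    have hν1 : 1 ≤ matchNum G := by
      have : 0 < M₀.ncard := (Set.ncard_pos (Set.toFinite _)).mpr ⟨e₀, he₀⟩
      omega
    have hsub : (eraseV G v).edgeSet ⊆ G.edgeSet := fun e he => (eraseV_edgeSet.mp he).1
    have he₀G : e₀ ∈ G.edgeSet := hM₀.1 he₀
    have he₀G' : e₀ ∉ (eraseV G v).edgeSet := fun h => (eraseV_edgeSet.mp h).2 hve₀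
    have hlt : (eraseV G v).edgeSet.ncard < G.edgeSet.ncard :=
      Set.ncard_lt_ncard ⟨hsub, fun h => he₀G' (h he₀G)⟩ (Set.toFinite _)
    have hm1 : 1 ≤ m := by omega
    have hup : matchNum (eraseV G v) ≤ matchNum G - 1 := by
      obtain ⟨M₁, hM₁, hM₁card⟩ := exists_max_matching (eraseV G v)
      have h1 := eraseV_matching.mp hM₁
      have h2 : M₁.ncard ≤ matchNum G := le_matchNum h1.1
      have h3 : M₁.ncard ≠ matchNum G := by
        intro h
        obtain ⟨e, he, hve⟩ := hv M₁ h1.1 h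
        exact h1.2 e he hve
      omega
    have hdown : matchNum G - 1 ≤ matchNum (eraseV G v) := by
      have hK : IsGraphMatching (eraseV G v) (M₀ \ {e₀}) := by
        refine eraseV_matching.mpr ⟨⟨Set.diff_subset.trans hM₀.1,
          hM₀.2.mono Set.diff_subset⟩, ?_⟩
        rintro e ⟨heM, hee₀⟩ hve
        exact hee₀ (unique_edge hM₀ heM he₀ hve hve₀)
      have h4 := le_matchNum hK
      rw [Set.ncard_diff_singleton_of_mem he₀, hM₀card] at h4
      exact h4
    obtain ⟨S', hS'⟩ := ih (m - 1) (by omega) (eraseV G v) (by omega)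
    by_cases hvS : v ∈ S'
    · refine ⟨S', ?_⟩
      have heq : oddComponents G S' = oddComponents (eraseV G v) S' :=
        odd_count_congr _ _ (induce_eraseV hvS)
      rw [heq]
      omega
    · refine ⟨insert v S', ?_⟩
      have h1 : oddComponents (eraseV G v) S' =
          oddComponents (eraseV G v) (insert v S') + 1 :=
        odd_isolated (eraseV G v) S' v hvS (fun u h => h.2.1 rfl)
      have h2 : oddComponents (eraseV G v) (insert v S') = oddComponents G (insert v S') :=
        (odd_count_congr _ _ (induce_eraseV (Set.mem_insert _ _))).symm
      have h3 : (insert v S').ncard = S'.ncard + 1 :=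
        Set.ncard_insert_of_notMem hvS (Set.toFinite _)
      rw [h2] at h1
      rw [h1] at hS'
      rw [h3]
      omega
  · -- every vertex is avoidable
    push_neg at hA
    have havoid : ∀ v : V, ∃ N : Set (Sym2 V),
        IsGraphMatching G N ∧ N.ncard = matchNum G ∧ v ∉ mcov N := by
      intro v
      obtain ⟨K, hK1, hK2, hK3⟩ := hA v
      exact ⟨K, hK1, hK2, fun ⟨e, he, hve⟩ => hK3 e he hve⟩
    have hgal := gallai havoid
    refine ⟨∅, ?_⟩
    rw [Set.ncard_empty]
    have hcovcard : (mcov M₀).ncard = 2 * M₀.ncard :=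
      mcov_ncard M₀ (fun e he => G.not_isDiag_of_mem_edgeSet (hM₀.1 he)) hM₀.2
    have hcompl : (mcov M₀).ncard + (mcov M₀)ᶜ.ncard = Fintype.card V := by
      rw [Set.ncard_add_ncard_compl _ (Set.toFinite _), Nat.card_eq_fintype_card]
    have hmemc : ∀ x : V, x ∈ (((∅ : Set V))ᶜ : Set V) := fun x => by simp
    set f : V → (G.induce (((∅ : Set V))ᶜ : Set V)).ConnectedComponent :=
      fun x => (G.induce (((∅ : Set V))ᶜ : Set V)).connectedComponentMk ⟨x, hmemc x⟩ with hfdef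
    have hreachG : ∀ (x y : V),
        (G.induce (((∅ : Set V))ᶜ : Set V)).Reachable ⟨x, hmemc x⟩ ⟨y, hmemc y⟩ →
        G.Reachable x y := by
      intro x y h
      exact h.map (SimpleGraph.Embedding.induce _).toHom
    have hself : ∀ x : V, x ∈ suppV G ∅ (f x) :=
      fun x => mem_suppV.mpr ⟨hmemc x, rfl⟩
    have hmemsupp : ∀ (x u : V), u ∈ suppV G ∅ (f x) → u ≠ x → G.Reachable u x := by
      intro x u hu hne
      obtain ⟨hu', hC⟩ := mem_suppV.mp hu
      exact hreachG u x (ConnectedComponent.exact hC)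
    have hmapsto : ∀ x ∈ (mcov M₀)ᶜ,
        f x ∈ {C : (G.induce (((∅ : Set V))ᶜ : Set V)).ConnectedComponent |
          Odd C.supp.ncard} := by
      intro x hx
      have hclose : ∀ e ∈ M₀, ∀ u, u ∈ e → u ∈ suppV G ∅ (f x) →
          ∀ y, y ∈ e → y ∈ suppV G ∅ (f x) := by
        intro e he u hue huC y hye
        by_cases hyu : y = u
        · exact hyu ▸ huC
        · have hsy : s(u, y) = e :=
            ((Sym2.mem_and_mem_iff (fun h => hyu h.symm)).mp ⟨hue, hye⟩).symm
          exact suppV_adj huC (G.mem_edgeSet.mp (hsy ▸ hM₀.1 he)) (hmemc y)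
      have hpart := part hM₀ (suppV G ∅ (f x)) hclose
      have hsingle : suppV G ∅ (f x) \ mcov M₀ = {x} := by
        ext u
        constructor
        · rintro ⟨huC, humc⟩
          by_contra hne
          exact hgal M₀ u x hM₀ hM₀card humc hx hne (hmemsupp x u huC hne)
        · intro hu
          rw [Set.mem_singleton_iff] at hu
          subst hu
          exact ⟨hself _, hx⟩
      rw [hsingle, Set.ncard_singleton] at hpart
      show Odd (f x).supp.ncard
      rw [← suppV_ncard (f x), hpart]
      exact odd_two_mul_add_one _
    have hinj : Set.InjOn f ((mcov M₀)ᶜ) := by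
      intro x hx y hy heq
      by_contra hne
      have hxy : x ∈ suppV G ∅ (f y) := heq ▸ hself x
      exact hgal M₀ x y hM₀ hM₀card hx hy hne (hmemsupp y x hxy hne)
    have hle := Set.ncard_le_ncard_of_injOn f hmapsto hinj (Set.toFinite _)
    have : oddComponents G ∅ =
        Set.ncard {C : (G.induce (((∅ : Set V))ᶜ : Set V)).ConnectedComponent |
          Odd C.supp.ncard} := rfl
    rw [this]
    omega


end TutteBerge

/-- Tutte–Berge formula: twice the maximum size of a matching of a finite
simple graph `G` on `n` vertices equals the minimum over all vertex subsets `S` of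
`n − odd(G − S) + |S|`. -/
theorem statement8 {V : Type*} [Fintype V] (G : SimpleGraph V) :
    2 * sSup {k : ℕ | ∃ M : Set (Sym2 V), IsGraphMatching G M ∧ M.ncard = k} =
      sInf {k : ℕ | ∃ S : Set V,
        k = Fintype.card V - oddComponents G S + S.ncard} := by
  classical
  have hL : sSup {k : ℕ | ∃ M : Set (Sym2 V), IsGraphMatching G M ∧ M.ncard = k} =
      TutteBerge.matchNum G := rfl
  rw [hL]
  obtain ⟨M₀, hM₀, hM₀card⟩ := TutteBerge.exists_max_matching G
  apply le_antisymm
  · have hne : {k : ℕ | ∃ S : Set V,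
        k = Fintype.card V - oddComponents G S + S.ncard}.Nonempty :=
      ⟨_, ⟨∅, rfl⟩⟩
    apply le_csInf hne
    rintro k ⟨S, rfl⟩
    have h1 := TutteBerge.easy S hM₀
    have h2 := TutteBerge.oddcomp_le G S
    rw [hM₀card] at h1
    omega
  · obtain ⟨S, hS⟩ := TutteBerge.hard (G.edgeSet.ncard) G le_rfl
    exact le_trans (Nat.sInf_le ⟨S, rfl⟩) hS
end
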